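/- arXiv:1605.08284 — 3 statements merged into one kernel-verified Lean document; each statement's English description precedes it below -/
import Mathlib

section
/- Let A be a real n×n matrix, B a real n×m matrix, K a real m×n matrix (the full state feedback gain), C a real r×n output matrix, Λ_r a real r×r matrix, and V_r a real n×r matrix such that (A − B·K)·V_r = V_r·Λ_r and the r×r matrix C·V_r is invertible. Define the output feedback gain K_o := K·V_r·(C·V_r)⁻¹. Then (A − B·K_o·C)·V_r = V_r·Λ_r, i.e., the output feedback closed loop retains the eigenstructure spanned by V_r. -/
/-- Projective control identity: the output feedback gain
`K_o = K V_r (C V_r)⁻¹` retains the eigenstructure `(A - BK) V_r = V_r Λ_r`. -/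
theorem projective_control_retains_eigenstructure
    {n m r : ℕ}
    (A : Matrix (Fin n) (Fin n) ℝ) (B : Matrix (Fin n) (Fin m) ℝ)
    (K : Matrix (Fin m) (Fin n) ℝ) (C : Matrix (Fin r) (Fin n) ℝ)
    (Λr : Matrix (Fin r) (Fin r) ℝ) (Vr : Matrix (Fin n) (Fin r) ℝ)
    (hspec : (A - B * K) * Vr = Vr * Λr)
    (hinv : IsUnit (C * Vr))
    (Ko : Matrix (Fin m) (Fin r) ℝ)
    (hKo : Ko = K * Vr * (C * Vr)⁻¹) :
    (A - B * Ko * C) * Vr = Vr * Λr := by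
  have h : (C * Vr)⁻¹ * (C * Vr) = 1 :=
    Matrix.nonsing_inv_mul _ ((Matrix.isUnit_iff_isUnit_det _).mp hinv)
  calc (A - B * Ko * C) * Vr
      = A * Vr - B * (K * Vr) * ((C * Vr)⁻¹ * (C * Vr)) := by
        subst hKo; simp only [Matrix.sub_mul, Matrix.mul_assoc]
    _ = (A - B * K) * Vr := by rw [h]; simp only [Matrix.mul_one, Matrix.sub_mul, Matrix.mul_assoc]
    _ = Vr * Λr := hspec
end

section
/- Let A be a real n×n matrix, B a real n×m matrix, K a real m×n matrix, C a real r×n matrix, Λ_r a real r×r diagonal matrix, and V_r a real n×r matrix such that (A − B·K)·V_r = V_r·Λ_r and C·V_r is invertible. Set K_o := K·V_r·(C·V_r)⁻¹. Then for every index i, the i-th column v_i of V_r satisfies (A − B·K_o·C)·v_i = (Λ_r)_{ii}·v_i; in particular, if v_i ≠ 0 then the retained eigenvalue (Λ_r)_{ii} is an eigenvalue of the output feedback closed-loop matrix A − B·K_o·C with eigenvector v_i. -/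
/-- Under projective control with `Λ_r` diagonal, each column `v_i` of `V_r` is mapped by
`A - B K_o C` to `(Λ_r)_{ii} • v_i`; in particular, nonzero columns are eigenvectors of the
output feedback closed-loop matrix with the retained eigenvalues. -/
theorem projective_control_retained_eigenvalues
    {n m r : ℕ}
    (A : Matrix (Fin n) (Fin n) ℝ) (B : Matrix (Fin n) (Fin m) ℝ)
    (K : Matrix (Fin m) (Fin n) ℝ) (C : Matrix (Fin r) (Fin n) ℝ)
    (Λr : Matrix (Fin r) (Fin r) ℝ) (Vr : Matrix (Fin n) (Fin r) ℝ)
    (hdiag : Λr.IsDiag)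
    (hspec : (A - B * K) * Vr = Vr * Λr)
    (hinv : IsUnit (C * Vr))
    (Ko : Matrix (Fin m) (Fin r) ℝ)
    (hKo : Ko = K * Vr * (C * Vr)⁻¹) :
    ∀ i : Fin r,
      (A - B * Ko * C).mulVec (fun j => Vr j i) = (Λr i i) • (fun j => Vr j i) ∧
      ((fun j => Vr j i) ≠ (0 : Fin n → ℝ) →
        Module.End.HasEigenvector (Matrix.toLin' (A - B * Ko * C)) (Λr i i)
          (fun j => Vr j i)) := by
  have hdet : IsUnit (C * Vr).det := (Matrix.isUnit_iff_isUnit_det _).mp hinv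
  have hKoC : Ko * (C * Vr) = K * Vr := by
    rw [hKo, Matrix.mul_assoc, Matrix.nonsing_inv_mul _ hdet, Matrix.mul_one]
  have key : (A - B * Ko * C) * Vr = Vr * Λr := by
    have h1 : B * Ko * C * Vr = B * K * Vr := by
      rw [Matrix.mul_assoc (B * Ko) C Vr, Matrix.mul_assoc B Ko (C * Vr), hKoC,
        ← Matrix.mul_assoc]
    calc (A - B * Ko * C) * Vr = A * Vr - B * Ko * C * Vr := by rw [Matrix.sub_mul]
    _ = A * Vr - B * K * Vr := by rw [h1]
    _ = (A - B * K) * Vr := by rw [Matrix.sub_mul]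
    _ = Vr * Λr := hspec
  intro i
  have hmain : (A - B * Ko * C).mulVec (fun j => Vr j i) = (Λr i i) • (fun j => Vr j i) := by
    funext k
    have h2 : ((A - B * Ko * C) * Vr) k i = (Vr * Λr) k i := by rw [key]
    simp only [Matrix.mul_apply] at h2
    have h3 : ∑ j, Vr k j * Λr j i = Vr k i * Λr i i := by
      refine Finset.sum_eq_single i (fun j _ hj => ?_) (by simp)
      rw [hdiag hj, mul_zero]
    simp only [Matrix.mulVec, dotProduct, Pi.smul_apply, smul_eq_mul]
    rw [h2, h3, mul_comm]
  refine ⟨hmain, fun hne => ?_⟩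
  refine ⟨?_, hne⟩
  rw [Module.End.mem_eigenspace_iff, Matrix.toLin'_apply, hmain]
end

section
/- Let A_c be a real n×n matrix and μ ∈ ℝ with μ < −1/2 and ⟨x, A_c·x⟩ ≤ μ·‖x‖² for all x ∈ ℝⁿ, let G ∈ ℝⁿ, and let T ≥ 0. Suppose e : ℝ → ℝⁿ is differentiable with e'(t) = A_c·e(t) + τ(t)·G and |τ(t)| ≤ T for all t ≥ 0. Then for all t ≥ 0, ‖e(t)‖² ≤ e^{(2μ+1)t}·‖e(0)‖² + (‖G‖²·T²)/(−(2μ+1)). In particular solutions remain bounded under bounded disturbance torques (disturbance-to-state stability). -/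
/-!
Along a solution, `W = ‖e‖²` has derivative `2⟪e, A_c e⟫ + 2τ⟪e, G⟫`. The first term is at most
`2μ‖e‖²`, and Young's inequality gives `2τ⟪e, G⟫ ≤ ‖e‖² + T²‖G‖²`, so
`W' ≤ (2μ + 1) W + ‖G‖² T²`. Since `2μ + 1 < 0`, Grönwall's comparison bounds `W(t)` by the
decaying exponential plus the equilibrium level `‖G‖² T² / (-(2μ + 1))`.
-/

open Real Set

theorem gronwallBound_le_of_neg {δ K ε : ℝ} (hK : K < 0) (hε : 0 ≤ ε) (x : ℝ) :
    gronwallBound δ K ε x ≤ exp (K * x) * δ + ε / (-K) := by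
  rw [gronwallBound_of_K_ne_0 hK.ne]
  calc δ * exp (K * x) + ε / K * (exp (K * x) - 1)
      = exp (K * x) * δ + ε / (-K) - ε * exp (K * x) / (-K) := by
        rw [div_neg, div_neg]; ring
    _ ≤ exp (K * x) * δ + ε / (-K) := by
        have : 0 ≤ ε * exp (K * x) / (-K) := div_nonneg (mul_nonneg hε (exp_pos _).le) (by linarith)
        linarith

theorem le_exp_mul_add_div_neg_of_hasDerivAt_le {f f' : ℝ → ℝ} {K ε a b : ℝ}
    (hK : K < 0) (hε : 0 ≤ ε) (hf : ∀ x ∈ Icc a b, HasDerivAt f (f' x) x)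
    (bound : ∀ x ∈ Ico a b, f' x ≤ K * f x + ε) :
    ∀ x ∈ Icc a b, f x ≤ exp (K * (x - a)) * f a + ε / (-K) := by
  intro x hx
  have hcont : ContinuousOn f (Icc a b) := fun y hy => (hf y hy).continuousAt.continuousWithinAt
  have hslope y (hy : y ∈ Ico a b) r (hr : f' y < r) :=
    (hf y (Ico_subset_Icc_self hy)).hasDerivWithinAt.liminf_right_slope_le hr
  exact (le_gronwallBound_of_liminf_deriv_right_le hcont hslope le_rfl bound x hx).trans
    (gronwallBound_le_of_neg hK hε _)

theorem two_mul_inner_add_smul_le {E : Type*} [NormedAddCommGroup E] [InnerProductSpace ℝ E]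
    {A : E → E} {μ : ℝ} (hA : ∀ x, inner ℝ x (A x) ≤ μ * ‖x‖ ^ 2) (x g : E) {τ T : ℝ}
    (hτ : |τ| ≤ T) :
    2 * inner ℝ x (A x + τ • g) ≤ (2 * μ + 1) * ‖x‖ ^ 2 + ‖g‖ ^ 2 * T ^ 2 := by
  have hinner : τ * inner ℝ x g ≤ ‖x‖ * (|τ| * ‖g‖) := by
    calc τ * inner ℝ x g ≤ |τ| * |inner ℝ x g| := by rw [← abs_mul]; exact le_abs_self _
      _ ≤ |τ| * (‖x‖ * ‖g‖) := by gcongr; exact abs_real_inner_le_norm x g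
      _ = ‖x‖ * (|τ| * ‖g‖) := by ring
  have hyoung : 2 * ‖x‖ * (|τ| * ‖g‖) ≤ ‖x‖ ^ 2 + (|τ| * ‖g‖) ^ 2 :=
    two_mul_le_add_sq _ _
  have hsq : (|τ| * ‖g‖) ^ 2 ≤ ‖g‖ ^ 2 * T ^ 2 := by
    rw [mul_pow, sq_abs, mul_comm]
    exact mul_le_mul_of_nonneg_left (sq_le_sq' (neg_le_of_abs_le hτ) (le_of_abs_le hτ))
      (sq_nonneg _)
  rw [inner_add_right, real_inner_smul_right]
  linarith [hA x]

theorem disturbance_to_state_stability_general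
    {n : ℕ} (Ac : Matrix (Fin n) (Fin n) ℝ) (μ : ℝ) (hμ : μ < -(1 / 2))
    (hAc : ∀ x : EuclideanSpace ℝ (Fin n),
      (inner ℝ x (Matrix.toEuclideanLin Ac x) : ℝ) ≤ μ * ‖x‖ ^ 2)
    (G : EuclideanSpace ℝ (Fin n)) (T : ℝ) (τ : ℝ → ℝ)
    (e : ℝ → EuclideanSpace ℝ (Fin n))
    (he : ∀ t : ℝ, 0 ≤ t → HasDerivAt e (Matrix.toEuclideanLin Ac (e t) + τ t • G) t)
    (hτ : ∀ t : ℝ, 0 ≤ t → |τ t| ≤ T) :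
    ∀ t : ℝ, 0 ≤ t →
      ‖e t‖ ^ 2 ≤ Real.exp ((2 * μ + 1) * t) * ‖e 0‖ ^ 2 +
        ‖G‖ ^ 2 * T ^ 2 / (-(2 * μ + 1)) := by
  intro t ht
  have hK : 2 * μ + 1 < 0 := by linarith
  have hW := le_exp_mul_add_div_neg_of_hasDerivAt_le (f := fun s => ‖e s‖ ^ 2) hK
    (by positivity) (fun s hs => (he s hs.1).norm_sq)
    (fun s hs => two_mul_inner_add_smul_le hAc (e s) G (hτ s hs.1)) t ⟨ht, le_rfl⟩
  simpa only [sub_zero] using hW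

/-- Disturbance-to-state stability: if `⟨x, A_c x⟩ ≤ μ ‖x‖²` with `μ < -1/2`, and the
disturbance torque is bounded by `T`, then along solutions of `ė = A_c e + τ(t) G`,
`‖e(t)‖² ≤ exp((2μ+1)t) ‖e(0)‖² + ‖G‖² T² / (-(2μ+1))` for all `t ≥ 0`. -/
theorem disturbance_to_state_stability
    {n : ℕ} (Ac : Matrix (Fin n) (Fin n) ℝ) (μ : ℝ) (hμ : μ < -(1 / 2))
    (hAc : ∀ x : EuclideanSpace ℝ (Fin n),
      (inner ℝ x (Matrix.toEuclideanLin Ac x) : ℝ) ≤ μ * ‖x‖ ^ 2)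
    (G : EuclideanSpace ℝ (Fin n)) (T : ℝ) (hT : 0 ≤ T) (τ : ℝ → ℝ)
    (e : ℝ → EuclideanSpace ℝ (Fin n))
    (he : ∀ t : ℝ, 0 ≤ t → HasDerivAt e (Matrix.toEuclideanLin Ac (e t) + τ t • G) t)
    (hτ : ∀ t : ℝ, 0 ≤ t → |τ t| ≤ T) :
    ∀ t : ℝ, 0 ≤ t →
      ‖e t‖ ^ 2 ≤ Real.exp ((2 * μ + 1) * t) * ‖e 0‖ ^ 2 +
        ‖G‖ ^ 2 * T ^ 2 / (-(2 * μ + 1)) :=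
  disturbance_to_state_stability_general Ac μ hμ hAc G T τ e he hτ
end
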